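/- Fix δ ∈ (0, 1). For each d, let (e_1, …, e_d) be the standard basis of ℝ^d, let n = d + ⌊δd⌋, and let (x_1, …, x_n) = (e_1, …, e_d, e_1, …, e_{⌊δd⌋}) be points on S^{d−1}. Then: (i) this configuration satisfies the Diaconis–Freedman conditions, i.e. all |x_j|² = 1, and for every ε > 0 the number of ordered pairs j ≠ k with |⟨x_j, x_k⟩| > ε is o(n²) as d → ∞; but (ii) the conclusion of the main theorem fails: there exist a ∈ ℝ and a bounded Borel set I ⊂ ℝ such that N_I^{(d)} = #{ j : n(⟨x_j, √d·U⟩ − a) ∈ I }, with U uniform on S^{d−1}, does not converge in distribution to the Poisson distribution with parameter φ(a)·mes(I). -/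

import Mathlib

open MeasureTheory Metric Filter Classical
open scoped RealInnerProductSpace ENNReal Topology

/-- The uniform (normalized surface) probability measure on the unit sphere
`S^{d-1} ⊂ ℝ^d`. -/
noncomputable def sphereUniform (d : ℕ) :
    Measure (sphere (0 : EuclideanSpace ℝ (Fin d)) 1) :=
  ((volume : Measure (EuclideanSpace ℝ (Fin d))).toSphere Set.univ)⁻¹ •
    (volume : Measure (EuclideanSpace ℝ (Fin d))).toSphere

/-- The configuration `(x_1, …, x_n) = (e_1, …, e_d, e_1, …, e_{⌊δd⌋})` of
`n = d + ⌊δd⌋` points on `S^{d-1}` (standard basis vectors with the first `⌊δd⌋`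
of them repeated). Since `⌊δd⌋ ≤ d` for `δ < 1`, for `j ≥ d` the index `j % d`
equals `j - d`, so this is exactly the claimed configuration. -/
noncomputable def repeatedBasisConfig (δ : ℝ) (d : ℕ)
    (j : Fin (d + ⌊δ * d⌋₊)) : EuclideanSpace ℝ (Fin d) :=
  if hd : 0 < d then EuclideanSpace.single ⟨(j : ℕ) % d, Nat.mod_lt _ hd⟩ 1 else 0

/-!
Take `a = 0`, `I = [0, δ]`, `m = ⌊δd⌋`, and let `H(u)` be the set of coordinates `r` with
`n √d u_r ∈ I`. Since `x_j = e_(j mod d)`, the count is `N = #H + #{r ∈ H | r < m}`. Coordinate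
permutations preserve the uniform measure, so `p = P(H = {r})` does not depend on `r`; hence
`P(N = 1) = (d - m) p` while `P(N = 2) ≥ m p`, that is `(m/d) P(N = 1) ≤ (1 - m/d) P(N = 2)`.
A Poisson limit with parameter `λ = δ / √(2π)` would give `δ λ ≤ (1 - δ) λ² / 2`, which fails
because `λ < δ`. The Diaconis–Freedman conditions hold since `⟪x_j, x_k⟫ ≠ 0` with `j ≠ k`
forces `k = j ± d`, which leaves at most `n` such pairs.
-/

open Finset

namespace MeasureTheory

variable {E : Type*} [NormedAddCommGroup E] [NormedSpace ℝ E] [MeasurableSpace E] [BorelSpace E]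

def sphereRestrict (e : E ≃ₗᵢ[ℝ] E) (u : sphere (0 : E) 1) : sphere (0 : E) 1 :=
  ⟨e u, by simp⟩

theorem measurePreserving_sphereRestrict {μ : Measure E} {e : E ≃ₗᵢ[ℝ] E}
    (he : MeasurePreserving e μ μ) :
    MeasurePreserving (sphereRestrict e) μ.toSphere μ.toSphere := by
  have hcont : Continuous (sphereRestrict e) := by unfold sphereRestrict; fun_prop
  refine ⟨hcont.measurable, Measure.ext fun s hs => ?_⟩
  have himage : ((↑) '' (sphereRestrict e ⁻¹' s) : Set E) = e.symm '' ((↑) '' s) := by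
    ext x
    constructor
    · rintro ⟨u, hu, rfl⟩
      exact ⟨_, ⟨_, hu, rfl⟩, e.symm_apply_apply u⟩
    · rintro ⟨_, ⟨u, hu, rfl⟩, rfl⟩
      refine ⟨⟨e.symm u, by simp⟩, ?_, rfl⟩
      simpa [sphereRestrict] using hu
  -- `μ.toSphere s` is `dim E` times the `μ`-measure of the cone `Ioo 0 1 • s`, and `e` maps cones
  -- to cones.
  rw [Measure.map_apply hcont.measurable hs, μ.toSphere_apply' (hcont.measurable hs),
    μ.toSphere_apply' hs, himage, ← Set.image2_smul, ← Set.image2_smul,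
    ← Set.image_image2_distrib_right (fun a b => e.symm.map_smul a b),
    e.symm.image_eq_preimage_symm, e.symm_symm]
  exact congrArg _ (he.measure_preimage_equiv (f := e.toHomeomorph.toMeasurableEquiv) _)

end MeasureTheory

theorem Fin.card_filter_mod_eq_add {d m : ℕ} (hd : 0 < d) (hm : m ≤ d) (p : Fin d → Prop)
    [DecidablePred p] :
    #{j : Fin (d + m) | p ⟨j % d, Nat.mod_lt _ hd⟩} = #{r | p r} + #{r : Fin d | p r ∧ r < m} := by
  have hlow (i : Fin d) : (⟨(Fin.castAdd m i : ℕ) % d, Nat.mod_lt _ hd⟩ : Fin d) = i :=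
    Fin.ext (Nat.mod_eq_of_lt i.isLt)
  have hhigh (i : Fin m) :
      (⟨(Fin.natAdd d i : ℕ) % d, Nat.mod_lt _ hd⟩ : Fin d) = Fin.castLE hm i :=
    Fin.ext (by simp [Nat.mod_eq_of_lt (i.isLt.trans_le hm)])
  have hshift : #{i : Fin m | p (Fin.castLE hm i)} = #{r : Fin d | p r ∧ r < m} := by
    refine card_nbij (Fin.castLE hm) (fun i hi => ?_) (Fin.castLE_injective hm).injOn
      fun r hr => ?_
    · simp_all
    · simp only [coe_filter, mem_univ, true_and] at hr
      exact ⟨⟨r, hr.2⟩, by simpa using hr.1, rfl⟩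
  simp only [card_filter] at hshift ⊢
  rw [Fin.sum_univ_add]
  simp only [hlow, hhigh, hshift]

theorem Nat.mod_eq_self_or_sub_of_lt_two_mul {x d : ℕ} (hx : x < 2 * d) :
    x < d ∧ x % d = x ∨ d ≤ x ∧ x % d = x - d := by
  rcases lt_or_ge x d with h | h
  · exact .inl ⟨h, Nat.mod_eq_of_lt h⟩
  · exact .inr ⟨h, by rw [Nat.mod_eq_sub_mod h, Nat.mod_eq_of_lt (by omega)]⟩

theorem card_offDiag_mod_eq_le {n d : ℕ} (hn : n ≤ 2 * d) :
    #{p : Fin n × Fin n | p.1 ≠ p.2 ∧ (p.1 : ℕ) % d = p.2 % d} ≤ n := by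
  refine (card_le_card_of_injOn Prod.fst (fun _ _ => mem_univ _) ?_).trans (by simp)
  rintro ⟨j, k⟩ hjk ⟨j', k'⟩ hjk' (rfl : j = j')
  simp only [coe_filter, mem_univ, true_and, Set.mem_ofPred_eq, ne_eq, ← Fin.val_inj] at hjk hjk'
  have := Nat.mod_eq_self_or_sub_of_lt_two_mul (j.isLt.trans_le hn)
  have := Nat.mod_eq_self_or_sub_of_lt_two_mul (k.isLt.trans_le hn)
  have := Nat.mod_eq_self_or_sub_of_lt_two_mul (k'.isLt.trans_le hn)
  refine Prod.ext rfl (Fin.ext ?_)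
  dsimp only at *
  omega

local notation "𝕊" d:max => sphere (0 : EuclideanSpace ℝ (Fin d)) 1

section SphereUniform

variable {d : ℕ}

instance : IsFiniteMeasure (sphereUniform d) := by
  unfold sphereUniform
  rcases eq_zero_or_neZero (volume : Measure (EuclideanSpace ℝ (Fin d))).toSphere with h | h
  · rw [h, smul_zero]
    infer_instance
  · infer_instance

theorem measurePreserving_sphereRestrict_sphereUniform
    (e : EuclideanSpace ℝ (Fin d) ≃ₗᵢ[ℝ] EuclideanSpace ℝ (Fin d)) :
    MeasurePreserving (sphereRestrict e) (sphereUniform d) (sphereUniform d) :=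
  (measurePreserving_sphereRestrict e.measurePreserving).smul_measure _

noncomputable def coordHits (A : Set ℝ) (v : EuclideanSpace ℝ (Fin d)) : Finset (Fin d) :=
  {r | v r ∈ A}

theorem coordHits_piLpCongrLeft (A : Set ℝ) (σ : Equiv.Perm (Fin d))
    (v : EuclideanSpace ℝ (Fin d)) :
    coordHits A (LinearIsometryEquiv.piLpCongrLeft 2 ℝ ℝ σ v) =
      (coordHits A v).map σ.toEmbedding := by
  ext r
  simp [coordHits, Equiv.piCongrLeft']

theorem measurableSet_coordHits_eq {A : Set ℝ} (hA : MeasurableSet A) (S : Finset (Fin d)) :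
    MeasurableSet {u : 𝕊 d | coordHits A u = S} := by
  have hmem (r : Fin d) :
      Measurable fun u : 𝕊 d => (u : EuclideanSpace ℝ (Fin d)) r ∈ A :=
    measurableSet_setOfPred.1 (measurableSet_preimage (by fun_prop) hA)
  simp only [Finset.ext_iff, coordHits, mem_filter, mem_univ, true_and]
  exact measurableSet_setOfPred.2 (Measurable.forall fun r => (hmem r).iff measurable_const)

theorem sphereUniform_coordHits_eq_singleton {A : Set ℝ} (hA : MeasurableSet A) (r r' : Fin d) :
    sphereUniform d {u : 𝕊 d | coordHits A u = {r}} =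
      sphereUniform d {u : 𝕊 d | coordHits A u = {r'}} := by
  set e := LinearIsometryEquiv.piLpCongrLeft 2 ℝ ℝ (Equiv.swap r r')
  have hpre : sphereRestrict e ⁻¹' {u : 𝕊 d | coordHits A u = {r'}} =
      {u : 𝕊 d | coordHits A u = {r}} := by
    ext u
    simp only [Set.mem_preimage, Set.mem_ofPred_eq, sphereRestrict, e, coordHits_piLpCongrLeft]
    rw [show ({r'} : Finset (Fin d)) = ({r} : Finset _).map (Equiv.swap r r').toEmbedding by simp,
      Finset.map_inj]
  rw [← hpre, (measurePreserving_sphereRestrict_sphereUniform e).measure_preimage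
    (measurableSet_coordHits_eq hA _).nullMeasurableSet]

theorem sphereUniform_biUnion_coordHits_eq_singleton {A : Set ℝ} (hA : MeasurableSet A)
    (T : Finset (Fin d)) (r₀ : Fin d) :
    sphereUniform d (⋃ r ∈ T, {u : 𝕊 d | coordHits A u = {r}}) =
      #T * sphereUniform d {u : 𝕊 d | coordHits A u = {r₀}} := by
  have hdisj : Set.PairwiseDisjoint ↑T fun r : Fin d => {u : 𝕊 d | coordHits A u = {r}} :=
    fun r _ r' _ hne => Set.disjoint_left.2 fun u hu hu' =>
      hne (singleton_injective (hu.symm.trans hu'))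
  rw [measure_biUnion_finset hdisj fun r _ => measurableSet_coordHits_eq hA {r},
    sum_congr rfl fun r _ => sphereUniform_coordHits_eq_singleton hA r r₀, sum_const, nsmul_eq_mul]

theorem mul_sphereUniform_count_eq_one_le {m : ℕ} (hd : 0 < d) (hm : m ≤ d) {A : Set ℝ}
    (hA : MeasurableSet A) (N : 𝕊 d → ℕ)
    (hN : ∀ u : 𝕊 d, N u = #(coordHits A (u : EuclideanSpace ℝ (Fin d))) +
      #{r ∈ coordHits A (u : EuclideanSpace ℝ (Fin d)) | r.val < m}) :
    (m : ℝ≥0∞) * sphereUniform d {u | N u = 1} ≤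
      ((d - m : ℕ) : ℝ≥0∞) * sphereUniform d {u | N u = 2} := by
  set p := sphereUniform d {u : 𝕊 d | coordHits A u = {⟨0, hd⟩}}
  have hone : {u | N u = 1} = ⋃ r ∈ ({r | ¬ (r : ℕ) < m} : Finset (Fin d)),
      {u : 𝕊 d | coordHits A u = {r}} := by
    ext u
    simp only [Set.mem_ofPred_eq, Set.mem_iUnion, hN, mem_filter, mem_univ, true_and, exists_prop]
    constructor
    · intro h
      have hle := card_filter_le (coordHits A u) fun r : Fin d => (r : ℕ) < m
      obtain ⟨r, hr⟩ := card_eq_one.1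
        (show #(coordHits A (u : EuclideanSpace ℝ (Fin d))) = 1 by omega)
      refine ⟨r, fun hrm => ?_, hr⟩
      simp [hr] at h
      omega
    · rintro ⟨r, hr, hH⟩
      simpa [hH] using hr
  have htwo : ⋃ r ∈ ({r | (r : ℕ) < m} : Finset (Fin d)), {u : 𝕊 d | coordHits A u = {r}} ⊆
      {u | N u = 2} := by
    simp only [Set.iUnion_subset_iff, mem_filter, mem_univ, true_and]
    intro r hr u hu
    simp [hN, show coordHits A u = {r} from hu, filter_singleton, hr]
  have hcard_lt : #{r : Fin d | (r : ℕ) < m} = m := by simp [Fin.card_filter_val_lt, hm]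
  have hcard_ge : #{r : Fin d | ¬ (r : ℕ) < m} = d - m := by
    rw [filter_not, card_sdiff_of_subset (filter_subset _ _), hcard_lt, card_univ, Fintype.card_fin]
  calc (m : ℝ≥0∞) * sphereUniform d {u | N u = 1}
      = ((d - m : ℕ) : ℝ≥0∞) * (m * p) := by
        rw [hone, sphereUniform_biUnion_coordHits_eq_singleton hA _ ⟨0, hd⟩, hcard_ge]
        ring
    _ = ((d - m : ℕ) : ℝ≥0∞) *
        sphereUniform d (⋃ r ∈ ({r | (r : ℕ) < m} : Finset (Fin d)),
          {u : 𝕊 d | coordHits A u = {r}}) := by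
        rw [sphereUniform_biUnion_coordHits_eq_singleton hA _ ⟨0, hd⟩, hcard_lt]
    _ ≤ ((d - m : ℕ) : ℝ≥0∞) * sphereUniform d {u | N u = 2} := by
        gcongr

end SphereUniform

section RepeatedBasis

variable {δ : ℝ} {d : ℕ}

theorem floor_mul_le_of_le_one (hδ : δ ≤ 1) : ⌊δ * d⌋₊ ≤ d :=
  Nat.floor_le_of_le (mul_le_of_le_one_left d.cast_nonneg hδ)

theorem inner_repeatedBasisConfig (hd : 0 < d) (j : Fin (d + ⌊δ * d⌋₊))
    (v : EuclideanSpace ℝ (Fin d)) :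
    ⟪repeatedBasisConfig δ d j, v⟫ = v ⟨j % d, Nat.mod_lt _ hd⟩ := by
  simp [repeatedBasisConfig, hd, EuclideanSpace.inner_single_left]

theorem norm_repeatedBasisConfig (hd : 0 < d) (j : Fin (d + ⌊δ * d⌋₊)) :
    ‖repeatedBasisConfig δ d j‖ = 1 := by
  simp [repeatedBasisConfig, hd]

theorem card_large_inner_repeatedBasisConfig_le (hδ : δ ≤ 1) (hd : 0 < d) {ε : ℝ} (hε : 0 < ε) :
    #{p : Fin (d + ⌊δ * d⌋₊) × Fin (d + ⌊δ * d⌋₊) | p.1 ≠ p.2 ∧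
      ε < |⟪repeatedBasisConfig δ d p.1, repeatedBasisConfig δ d p.2⟫|} ≤ d + ⌊δ * d⌋₊ := by
  refine (card_le_card fun p hp => ?_).trans
    (card_offDiag_mod_eq_le (d := d) (by have := floor_mul_le_of_le_one (d := d) hδ; omega))
  simp only [mem_filter, mem_univ, true_and] at hp ⊢
  refine ⟨hp.1, by_contra fun hne => ?_⟩
  have hzero : ⟪repeatedBasisConfig δ d p.1, repeatedBasisConfig δ d p.2⟫ = 0 := by
    rw [inner_repeatedBasisConfig hd, repeatedBasisConfig, dif_pos hd]
    simp [Fin.ext_iff, Ne.symm hne]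
  have hlarge := hp.2
  rw [hzero, abs_zero] at hlarge
  exact lt_asymm hlarge hε

theorem tendsto_card_large_inner_repeatedBasisConfig_div_sq (hδ : δ ≤ 1) {ε : ℝ} (hε : 0 < ε) :
    Tendsto (fun d : ℕ =>
        (#{p : Fin (d + ⌊δ * d⌋₊) × Fin (d + ⌊δ * d⌋₊) | p.1 ≠ p.2 ∧
          ε < |⟪repeatedBasisConfig δ d p.1, repeatedBasisConfig δ d p.2⟫|} : ℝ) /
          ((d + ⌊δ * d⌋₊ : ℕ) : ℝ) ^ 2)
      atTop (𝓝 0) := by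
  refine squeeze_zero' (Eventually.of_forall fun d => by positivity) ?_
    tendsto_one_div_atTop_nhds_zero_nat
  filter_upwards [eventually_gt_atTop 0] with d hd
  have hcard : (#{p : Fin (d + ⌊δ * d⌋₊) × Fin (d + ⌊δ * d⌋₊) | p.1 ≠ p.2 ∧
      ε < |⟪repeatedBasisConfig δ d p.1, repeatedBasisConfig δ d p.2⟫|} : ℝ) ≤
      ((d + ⌊δ * d⌋₊ : ℕ) : ℝ) := by
    exact_mod_cast card_large_inner_repeatedBasisConfig_le hδ hd hε
  have hn : (0 : ℝ) < ((d + ⌊δ * d⌋₊ : ℕ) : ℝ) := by positivity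
  calc _ ≤ ((d + ⌊δ * d⌋₊ : ℕ) : ℝ) / ((d + ⌊δ * d⌋₊ : ℕ) : ℝ) ^ 2 := by gcongr
    _ = 1 / ((d + ⌊δ * d⌋₊ : ℕ) : ℝ) := by field_simp
    _ ≤ 1 / d := by gcongr; simp

noncomputable def hitCount (δ a : ℝ) (I : Set ℝ) (d : ℕ) (u : 𝕊 d) : ℕ :=
  #{j : Fin (d + ⌊δ * d⌋₊) | ((d + ⌊δ * d⌋₊ : ℕ) : ℝ) *
    (⟪repeatedBasisConfig δ d j, Real.sqrt d • (u : EuclideanSpace ℝ (Fin d))⟫ - a) ∈ I}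

theorem hitCount_eq_card_coordHits_add (hd : 0 < d) (hδ : δ ≤ 1) (a : ℝ) (I : Set ℝ) (u : 𝕊 d) :
    hitCount δ a I d u =
      #(coordHits {x | ((d + ⌊δ * d⌋₊ : ℕ) : ℝ) * (Real.sqrt d * x - a) ∈ I}
        (u : EuclideanSpace ℝ (Fin d))) +
      #{r ∈ coordHits {x | ((d + ⌊δ * d⌋₊ : ℕ) : ℝ) * (Real.sqrt d * x - a) ∈ I}
        (u : EuclideanSpace ℝ (Fin d)) | r.val < ⌊δ * d⌋₊} := by
  simp only [hitCount, inner_repeatedBasisConfig hd, coordHits, filter_filter, PiLp.smul_apply,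
    smul_eq_mul, Set.mem_ofPred_eq]
  exact Fin.card_filter_mod_eq_add hd (floor_mul_le_of_le_one hδ)
    (fun r => ((d + ⌊δ * d⌋₊ : ℕ) : ℝ) * (Real.sqrt d * (u : EuclideanSpace ℝ (Fin d)) r - a) ∈ I)

theorem floor_div_mul_hitCount_eq_one_le (hd : 0 < d) (hδ : δ ≤ 1) (a : ℝ) {I : Set ℝ}
    (hI : MeasurableSet I) :
    (⌊δ * d⌋₊ / d : ℝ) * (sphereUniform d {u | hitCount δ a I d u = 1}).toReal ≤
      (1 - ⌊δ * d⌋₊ / d) * (sphereUniform d {u | hitCount δ a I d u = 2}).toReal := by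
  have hA : MeasurableSet {x : ℝ | ((d + ⌊δ * d⌋₊ : ℕ) : ℝ) * (Real.sqrt d * x - a) ∈ I} :=
    measurableSet_preimage (by fun_prop) hI
  have hm := floor_mul_le_of_le_one (d := d) hδ
  have h := ENNReal.toReal_mono (by finiteness) (mul_sphereUniform_count_eq_one_le hd hm hA _
    (hitCount_eq_card_coordHits_add hd hδ a I))
  rw [ENNReal.toReal_mul, ENNReal.toReal_mul, ENNReal.toReal_natCast, ENNReal.toReal_natCast,
    Nat.cast_sub hm] at h
  have hd' : (0 : ℝ) < d := by exact_mod_cast hd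
  rw [div_mul_eq_mul_div, one_sub_div hd'.ne', div_mul_eq_mul_div]
  exact div_le_div_of_nonneg_right h hd'.le

end RepeatedBasis

theorem mul_poisson_two_lt_mul_poisson_one {δ r : ℝ} (hr : 0 < r) (hrδ : r ≤ δ) :
    (1 - δ) * (Real.exp (-r) * r ^ 2 / (Nat.factorial 2)) <
      δ * (Real.exp (-r) * r ^ 1 / (Nat.factorial 1)) := by
  have hpos : 0 < Real.exp (-r) * r := by positivity
  simp only [Nat.factorial]
  nlinarith [mul_pos hpos hr]

/-- For fixed `δ ∈ (0,1)`, the configuration `(e_1, …, e_d, e_1, …, e_{⌊δd⌋})` of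
`n = d + ⌊δd⌋` points on `S^{d-1}` satisfies the Diaconis–Freedman conditions
(unit norms, and for every `ε > 0` the number of ordered pairs `j ≠ k` with
`|⟨x_j, x_k⟩| > ε` is `o(n²)`), yet the conclusion of the main theorem fails:
for some `a ∈ ℝ` and bounded Borel `I ⊆ ℝ`, the count
`N_I^{(d)} = #{j : n(⟨x_j, √d·U⟩ - a) ∈ I}` does not converge in distribution to
`Pois(φ(a)·mes I)`. -/
theorem diaconis_freedman_not_sufficient (δ : ℝ) (hδ : δ ∈ Set.Ioo (0 : ℝ) 1) :
    (∀ d : ℕ, 0 < d → ∀ j : Fin (d + ⌊δ * d⌋₊), ‖repeatedBasisConfig δ d j‖ ^ 2 = 1) ∧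
    (∀ ε : ℝ, 0 < ε →
      Tendsto (fun d : ℕ =>
          ((Finset.univ.filter
              (fun p : Fin (d + ⌊δ * d⌋₊) × Fin (d + ⌊δ * d⌋₊) =>
                p.1 ≠ p.2 ∧
                  ε < |⟪repeatedBasisConfig δ d p.1, repeatedBasisConfig δ d p.2⟫|)).card : ℝ)
            / ((d + ⌊δ * d⌋₊ : ℕ) : ℝ) ^ 2)
        atTop (𝓝 0)) ∧
    ∃ a : ℝ, ∃ I : Set ℝ, Bornology.IsBounded I ∧ MeasurableSet I ∧
      ¬ (∀ k : ℕ,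
        Tendsto (fun d : ℕ =>
            ((sphereUniform d)
              {u | (Finset.univ.filter (fun j : Fin (d + ⌊δ * d⌋₊) =>
                  ((d + ⌊δ * d⌋₊ : ℕ) : ℝ) *
                    (⟪repeatedBasisConfig δ d j,
                        Real.sqrt d • (u : EuclideanSpace ℝ (Fin d))⟫ - a)
                    ∈ I)).card = k}).toReal)
          atTop
          (𝓝 (Real.exp (-((2 * Real.pi) ^ (-(1/2) : ℝ) * Real.exp (-a ^ 2 / 2) *
                (volume I).toReal)) *
              ((2 * Real.pi) ^ (-(1/2) : ℝ) * Real.exp (-a ^ 2 / 2) *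
                (volume I).toReal) ^ k / (Nat.factorial k)))) := by
  obtain ⟨hδ0, hδ1⟩ := hδ
  refine ⟨fun d hd j => by rw [norm_repeatedBasisConfig hd, one_pow],
    fun ε hε => tendsto_card_large_inner_repeatedBasisConfig_div_sq hδ1.le hε,
    0, Set.Icc 0 δ, isBounded_Icc 0 δ, measurableSet_Icc, fun hP => ?_⟩
  have hc : (2 * Real.pi) ^ (-(1/2) : ℝ) < 1 :=
    Real.rpow_lt_one_of_one_lt_of_neg (by linarith [Real.pi_gt_three]) (by norm_num)
  have hrate : (2 * Real.pi) ^ (-(1/2) : ℝ) * Real.exp (-0 ^ 2 / 2) *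
      (volume (Set.Icc 0 δ)).toReal = (2 * Real.pi) ^ (-(1/2) : ℝ) * δ := by
    simp [Real.volume_Icc, hδ0.le]
  have hfloor : Tendsto (fun d : ℕ => (⌊δ * d⌋₊ : ℝ) / d) atTop (𝓝 δ) :=
    (tendsto_nat_floor_mul_div_atTop hδ0.le).comp tendsto_natCast_atTop_atTop
  have hlim := le_of_tendsto_of_tendsto (hfloor.mul (hP 1))
    ((tendsto_const_nhds.sub hfloor).mul (hP 2)) <| (eventually_gt_atTop 0).mono
      fun d hd => floor_div_mul_hitCount_eq_one_le hd hδ1.le 0 measurableSet_Icc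
  rw [hrate] at hlim
  exact (mul_poisson_two_lt_mul_poisson_one (by positivity)
    (mul_le_of_le_one_left hδ0.le hc.le)).not_ge hlim
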